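/- For the disjoint union G ∪ H of graphs G and H, γ_MB(G) + γ_MB(H) ≤ γ_MB(G ∪ H) ≤ min{γ_MB'(G) + γ_MB(H), γ_MB(G) + γ_MB'(H)}. -/

import Mathlib

open SimpleGraph

namespace MBD

variable {V : Type*}

/-- Dominator's claimed set `D` is a dominating set of `G`. -/
def Dominates (G : SimpleGraph V) (D : Finset V) : Prop :=
  ∀ v : V, ∃ d ∈ D, d = v ∨ G.Adj d v

/-- Staller's claimed set `S` contains the whole closed neighborhood of some vertex. -/
def StallerWinSet (G : SimpleGraph V) (S : Finset V) : Prop :=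
  ∃ v : V, ∀ u : V, (u = v ∨ G.Adj u v) → u ∈ S

variable [DecidableEq V]

mutual
  /-- `DomD G k D S`: with Dominator having claimed `D`, Staller `S`, and Dominator to
  move, Dominator has a strategy winning the Maker-Breaker domination game on `G`
  using at most `k` further moves of his own. -/
  inductive DomD (G : SimpleGraph V) : ℕ → Finset V → Finset V → Prop
    | win {k : ℕ} {D S : Finset V} : Dominates G D → DomD G k D S
    | move {k : ℕ} {D S : Finset V} (v : V) : v ∉ D → v ∉ S →
        DomS G k (insert v D) S → DomD G (k + 1) D S
  /-- Like `DomD`, but it is Staller's turn to move. -/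
  inductive DomS (G : SimpleGraph V) : ℕ → Finset V → Finset V → Prop
    | win {k : ℕ} {D S : Finset V} : Dominates G D → DomS G k D S
    | move {k : ℕ} {D S : Finset V} : (∃ v : V, v ∉ D ∧ v ∉ S) →
        (∀ v : V, v ∉ D → v ∉ S → DomD G k D (insert v S)) → DomS G k D S
end

mutual
  /-- `StallD G k D S`: with Dominator having claimed `D`, Staller `S`, and Dominator to
  move, Staller has a strategy winning (claiming a whole closed neighborhood) within at
  most `k` further moves of her own. -/
  inductive StallD (G : SimpleGraph V) : ℕ → Finset V → Finset V → Prop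
    | win {k : ℕ} {D S : Finset V} : StallerWinSet G S → StallD G k D S
    | move {k : ℕ} {D S : Finset V} : (∃ v : V, v ∉ D ∧ v ∉ S) →
        (∀ v : V, v ∉ D → v ∉ S → StallS G k (insert v D) S) → StallD G k D S
  /-- Like `StallD`, but it is Staller's turn to move. -/
  inductive StallS (G : SimpleGraph V) : ℕ → Finset V → Finset V → Prop
    | win {k : ℕ} {D S : Finset V} : StallerWinSet G S → StallS G k D S
    | move {k : ℕ} {D S : Finset V} (v : V) : v ∉ D → v ∉ S →
        StallD G k D (insert v S) → StallS G (k + 1) D S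
end

/-- Dominator has a winning strategy in the D-game (Dominator starts). -/
def DominatorWinsD (G : SimpleGraph V) : Prop := ∃ k, DomD G k ∅ ∅

/-- Dominator has a winning strategy in the S-game (Staller starts). -/
def DominatorWinsS (G : SimpleGraph V) : Prop := ∃ k, DomS G k ∅ ∅

/-- Staller has a winning strategy in the D-game (Dominator starts). -/
def StallerWinsD (G : SimpleGraph V) : Prop := ∃ k, StallD G k ∅ ∅

/-- Staller has a winning strategy in the S-game (Staller starts). -/
def StallerWinsS (G : SimpleGraph V) : Prop := ∃ k, StallS G k ∅ ∅

/-- Outcome `𝒟`: Dominator wins both the D-game and the S-game. -/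
def outcomeD (G : SimpleGraph V) : Prop := DominatorWinsD G ∧ DominatorWinsS G

/-- Outcome `𝒮`: Staller wins both the D-game and the S-game. -/
def outcomeS (G : SimpleGraph V) : Prop := StallerWinsD G ∧ StallerWinsS G

/-- Outcome `𝒩`: the first player wins in both games. -/
def outcomeN (G : SimpleGraph V) : Prop := DominatorWinsD G ∧ StallerWinsS G

/-- `γ_MB(G)`: the minimum number of Dominator's moves needed to win the D-game,
`∞` if he has no winning strategy. -/
noncomputable def gMB (G : SimpleGraph V) : ℕ∞ :=
  sInf ((fun k : ℕ => (k : ℕ∞)) '' {k | DomD G k ∅ ∅})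

/-- `γ_MB'(G)`: the minimum number of Dominator's moves needed to win the S-game. -/
noncomputable def gMB' (G : SimpleGraph V) : ℕ∞ :=
  sInf ((fun k : ℕ => (k : ℕ∞)) '' {k | DomS G k ∅ ∅})

/-- `γ_SMB(G)`: the minimum number of Staller's moves needed to win the D-game. -/
noncomputable def gSMB (G : SimpleGraph V) : ℕ∞ :=
  sInf ((fun k : ℕ => (k : ℕ∞)) '' {k | StallD G k ∅ ∅})

/-- `γ_SMB'(G)`: the minimum number of Staller's moves needed to win the S-game. -/
noncomputable def gSMB' (G : SimpleGraph V) : ℕ∞ :=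
  sInf ((fun k : ℕ => (k : ℕ∞)) '' {k | StallS G k ∅ ∅})

end MBD

/-!
Passing never hurts Dominator (`DomS.toDomD`), so a strategy of his on `G ⊕g H` restricts to
each component with the same budget: a move in the other component is read as a pass. For the
upper bounds Dominator opens in the component of his D-game and afterwards always answers Staller
in the component she has just played in. For the lower bound Staller plays the same way, always
answering in Dominator's component; by induction, a win on `G ⊕g H` within `a + b + 1` moves
then yields a win on `G` within `a` moves or on `H` within `b` moves.
-/

namespace ENat

theorem sInf_natCast_image_le_iff {A : Set ℕ} (hA : IsUpperSet A) {k : ℕ} :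
    sInf ((fun n : ℕ => (n : ℕ∞)) '' A) ≤ k ↔ k ∈ A := by
  refine ⟨fun h => ?_, fun hk => sInf_le ⟨k, hk, rfl⟩⟩
  rcases ((fun n : ℕ => (n : ℕ∞)) '' A).eq_empty_or_nonempty with hempty | hne
  · simp [hempty] at h
  · obtain ⟨n, hn, hn_eq⟩ := csInf_mem hne
    exact hA (Nat.cast_le.1 (hn_eq.trans_le h)) hn

theorem le_add_of_forall_natCast {x y z : ℕ∞}
    (h : ∀ a b : ℕ, x ≤ a → y ≤ b → z ≤ ((a + b : ℕ) : ℕ∞)) : z ≤ x + y := by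
  induction x using ENat.recTopCoe with
  | top => simp
  | coe a =>
    induction y using ENat.recTopCoe with
    | top => simp
    | coe b => exact_mod_cast h a b le_rfl le_rfl

theorem add_le_of_forall_add_add_one_eq {x y : ℕ∞} {n : ℕ} (hx : x ≤ n) (hy : y ≤ n)
    (h : ∀ a b : ℕ, a + b + 1 = n → x ≤ a ∨ y ≤ b) : x + y ≤ n := by
  lift x to ℕ using ne_top_of_le_ne_top (natCast_ne_top n) hx
  lift y to ℕ using ne_top_of_le_ne_top (natCast_ne_top n) hy
  norm_cast at hx hy h ⊢
  rcases x with _ | a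
  · simpa using hy
  · rcases h a (n - a - 1) (by omega) with h | h <;> omega

end ENat

namespace MBD

open Finset Sum

section Game

variable {V : Type*} [DecidableEq V] {G : SimpleGraph V}

mutual

theorem DomD.mono {k k' : ℕ} {D S : Finset V} (h : DomD G k D S) (hk : k ≤ k') :
    DomD G k' D S :=
  match h with
  | .win hD => .win hD
  | .move v hvD hvS h => by
    obtain ⟨j, rfl⟩ : ∃ j, k' = j + 1 := ⟨k' - 1, by omega⟩
    exact .move v hvD hvS (DomS.mono h (by omega))

theorem DomS.mono {k k' : ℕ} {D S : Finset V} (h : DomS G k D S) (hk : k ≤ k') :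
    DomS G k' D S :=
  match h with
  | .win hD => .win hD
  | .move hfree h => .move hfree fun v hvD hvS => DomD.mono (h v hvD hvS) hk

end

mutual

theorem DomD.of_subset {k : ℕ} {D S S' : Finset V} (h : DomD G k D S) (hS : S' ⊆ S) :
    DomD G k D S' :=
  match h with
  | .win hD => .win hD
  | .move v hvD hvS h => .move v hvD (fun hv => hvS (hS hv)) (DomS.of_subset h hS)

theorem DomS.of_subset {k : ℕ} {D S S' : Finset V} (h : DomS G k D S) (hS : S' ⊆ S) :
    DomS G k D S' :=
  match h with
  | .win hD => .win hD
  | .move ⟨u, huD, huS⟩ h => .move ⟨u, huD, fun hu => huS (hS hu)⟩ fun v hvD hvS' => by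
    by_cases hvS : v ∈ S
    -- claiming `v ∈ S` again gains Staller nothing over claiming `u`
    · exact DomD.of_subset (h u huD huS)
        (insert_subset (mem_insert_of_mem hvS) (hS.trans (subset_insert _ _)))
    · exact DomD.of_subset (h v hvD hvS) (insert_subset_insert _ hS)

end

theorem DomS.toDomD {k : ℕ} {D S : Finset V} (h : DomS G k D S) : DomD G k D S :=
  match h with
  | .win hD => .win hD
  | .move ⟨u, huD, huS⟩ h => (h u huD huS).of_subset (subset_insert _ _)

end Game

section Iso

variable {V W : Type*} {G : SimpleGraph V} {G' : SimpleGraph W}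

theorem Dominates.map (e : G ≃g G') {D : Finset V} (h : Dominates G D) :
    Dominates G' (D.map e.toEquiv.toEmbedding) := fun w => by
  obtain ⟨d, hd, hdw⟩ := h (e.symm w)
  refine ⟨e d, mem_map_of_mem _ hd, ?_⟩
  rcases hdw with rfl | hdw
  · exact .inl (e.apply_symm_apply w)
  · exact .inr (by simpa using e.map_adj_iff.2 hdw)

variable [DecidableEq V] [DecidableEq W]

mutual

theorem DomD.map (e : G ≃g G') {k : ℕ} {D S : Finset V} (h : DomD G k D S) :
    DomD G' k (D.map e.toEquiv.toEmbedding) (S.map e.toEquiv.toEmbedding) :=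
  match h with
  | .win hD => .win (hD.map e)
  | .move v hvD hvS h => .move (e.toEquiv.toEmbedding v) ((mem_map' _).not.2 hvD)
      ((mem_map' _).not.2 hvS) (map_insert e.toEquiv.toEmbedding v D ▸ DomS.map e h)

theorem DomS.map (e : G ≃g G') {k : ℕ} {D S : Finset V} (h : DomS G k D S) :
    DomS G' k (D.map e.toEquiv.toEmbedding) (S.map e.toEquiv.toEmbedding) :=
  match h with
  | .win hD => .win (hD.map e)
  | .move ⟨u, huD, huS⟩ h =>
    .move ⟨e.toEquiv.toEmbedding u, (mem_map' _).not.2 huD, (mem_map' _).not.2 huS⟩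
      fun w hwD hwS => by
        obtain ⟨v, rfl⟩ := e.toEquiv.surjective w
        exact map_insert e.toEquiv.toEmbedding v S ▸
          DomD.map e (h v ((mem_map' _).not.1 hwD) ((mem_map' _).not.1 hwS))

end

end Iso

section Sum

variable {α β : Type*} {G : SimpleGraph α} {H : SimpleGraph β}

theorem dominates_sum_iff {D : Finset (α ⊕ β)} :
    Dominates (G ⊕g H) D ↔ Dominates G D.toLeft ∧ Dominates H D.toRight := by
  constructor
  · intro h
    refine ⟨fun x => ?_, fun y => ?_⟩
    · obtain ⟨d | d, hd, hdx⟩ := h (inl x)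
      · exact ⟨d, by simpa using hd, by simpa using hdx⟩
      · simp at hdx
    · obtain ⟨d | d, hd, hdy⟩ := h (inr y)
      · simp at hdy
      · exact ⟨d, by simpa using hd, by simpa using hdy⟩
  · rintro ⟨hG, hH⟩ (x | y)
    · obtain ⟨d, hd, hdx⟩ := hG x
      exact ⟨inl d, by simpa using hd, by simpa using hdx⟩
    · obtain ⟨d, hd, hdy⟩ := hH y
      exact ⟨inr d, by simpa using hd, by simpa using hdy⟩

variable [DecidableEq α] [DecidableEq β]

mutual

theorem DomD.dominates_toLeft_of_not_exists {k : ℕ} {D S : Finset (α ⊕ β)}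
    (h : DomD (G ⊕g H) k D S) (hG : ¬∃ x, x ∉ D.toLeft ∧ x ∉ S.toLeft) :
    Dominates G D.toLeft :=
  match h with
  | .win hD => (dominates_sum_iff.1 hD).1
  | .move (inl x) hxD hxS _ => absurd ⟨x, by simpa using hxD, by simpa using hxS⟩ hG
  | .move (inr _) _ _ h => by
    simpa using DomS.dominates_toLeft_of_not_exists h (by simpa using hG)

theorem DomS.dominates_toLeft_of_not_exists {k : ℕ} {D S : Finset (α ⊕ β)}
    (h : DomS (G ⊕g H) k D S) (hG : ¬∃ x, x ∉ D.toLeft ∧ x ∉ S.toLeft) :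
    Dominates G D.toLeft :=
  match h with
  | .win hD => (dominates_sum_iff.1 hD).1
  | .move ⟨inl x, hxD, hxS⟩ _ => absurd ⟨x, by simpa using hxD, by simpa using hxS⟩ hG
  | .move ⟨inr y, hyD, hyS⟩ h =>
    DomD.dominates_toLeft_of_not_exists (h (inr y) hyD hyS) (by simpa using hG)

end

mutual

theorem DomD.toLeft {k : ℕ} {D S : Finset (α ⊕ β)} (h : DomD (G ⊕g H) k D S) :
    DomD G k D.toLeft S.toLeft :=
  match h with
  | .win hD => .win (dominates_sum_iff.1 hD).1
  | .move (inl x) hxD hxS h =>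
    .move x (by simpa using hxD) (by simpa using hxS) (by simpa using DomS.toLeft h)
  | .move (inr _) _ _ h => by simpa using (DomS.toLeft h).toDomD.mono (Nat.le_succ _)

theorem DomS.toLeft {k : ℕ} {D S : Finset (α ⊕ β)} (h : DomS (G ⊕g H) k D S) :
    DomS G k D.toLeft S.toLeft :=
  match h with
  | .win hD => .win (dominates_sum_iff.1 hD).1
  | .move hU h => by
    by_cases hfree : ∃ x, x ∉ D.toLeft ∧ x ∉ S.toLeft
    · exact .move hfree fun x hxD hxS => by
        simpa using DomD.toLeft (h (inl x) (by simpa using hxD) (by simpa using hxS))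
    · exact .win ((DomS.move hU h).dominates_toLeft_of_not_exists hfree)

end

theorem DomD.sumComm {k : ℕ} {D S : Finset (α ⊕ β)} (h : DomD (G ⊕g H) k D S) :
    DomD (H ⊕g G) k (D.map (Equiv.sumComm α β).toEmbedding)
      (S.map (Equiv.sumComm α β).toEmbedding) :=
  h.map Iso.sumComm

theorem DomS.sumComm {k : ℕ} {D S : Finset (α ⊕ β)} (h : DomS (G ⊕g H) k D S) :
    DomS (H ⊕g G) k (D.map (Equiv.sumComm α β).toEmbedding)
      (S.map (Equiv.sumComm α β).toEmbedding) :=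
  h.map Iso.sumComm

theorem DomS.dominates_toRight_of_not_exists {k : ℕ} {D S : Finset (α ⊕ β)}
    (h : DomS (G ⊕g H) k D S) (hH : ¬∃ y, y ∉ D.toRight ∧ y ∉ S.toRight) :
    Dominates H D.toRight := by
  simpa using h.sumComm.dominates_toLeft_of_not_exists (by simpa using hH)

theorem DomD.toRight {k : ℕ} {D S : Finset (α ⊕ β)} (h : DomD (G ⊕g H) k D S) :
    DomD H k D.toRight S.toRight := by
  simpa using h.sumComm.toLeft

theorem DomS.toRight {k : ℕ} {D S : Finset (α ⊕ β)} (h : DomS (G ⊕g H) k D S) :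
    DomS H k D.toRight S.toRight := by
  simpa using h.sumComm.toLeft

mutual

theorem DomD.toLeft_or_toRight {a b k : ℕ} {D S : Finset (α ⊕ β)} (h : DomD (G ⊕g H) k D S)
    (hk : k = a + b + 1) : DomD G a D.toLeft S.toLeft ∨ DomD H b D.toRight S.toRight :=
  match h, hk with
  | .win hD, _ => .inl (.win (dominates_sum_iff.1 hD).1)
  | .move (inl x) hxD hxS h, hk => by
    rcases a with _ | a
    · exact .inr (by simpa using h.toRight.toDomD.mono (k' := b) (by omega))
    · by_cases hH : DomD H b D.toRight S.toRight
      · exact .inr hH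
      · exact .inl (.move x (by simpa using hxD) (by simpa using hxS)
          (by simpa using
            DomS.toLeft_of_not_toRight (a := a) (b := b) h (by omega) (by simpa using hH)))
  | .move (inr y) hyD hyS h, hk => by
    rcases b with _ | b
    · exact .inl (by simpa using h.toLeft.toDomD.mono (k' := a) (by omega))
    · by_cases hG : DomD G a D.toLeft S.toLeft
      · exact .inl hG
      · exact .inr (.move y (by simpa using hyD) (by simpa using hyS)
          (by simpa using
            DomS.toRight_of_not_toLeft (a := a) (b := b) h (by omega) (by simpa using hG)))

theorem DomS.toLeft_of_not_toRight {a b k : ℕ} {D S : Finset (α ⊕ β)}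
    (h : DomS (G ⊕g H) k D S) (hk : k = a + b + 1) (hH : ¬DomD H b D.toRight S.toRight) :
    DomS G a D.toLeft S.toLeft :=
  match h with
  | .win hD => .win (dominates_sum_iff.1 hD).1
  | .move hU h => by
    by_cases hfree : ∃ x, x ∉ D.toLeft ∧ x ∉ S.toLeft
    · refine .move hfree fun x hxD hxS => ?_
      have := DomD.toLeft_or_toRight (h (inl x) (by simpa using hxD) (by simpa using hxS)) hk
      simpa [hH] using this
    · exact .win ((DomS.move hU h).dominates_toLeft_of_not_exists hfree)

theorem DomS.toRight_of_not_toLeft {a b k : ℕ} {D S : Finset (α ⊕ β)}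
    (h : DomS (G ⊕g H) k D S) (hk : k = a + b + 1) (hG : ¬DomD G a D.toLeft S.toLeft) :
    DomS H b D.toRight S.toRight :=
  match h with
  | .win hD => .win (dominates_sum_iff.1 hD).2
  | .move hU h => by
    by_cases hfree : ∃ y, y ∉ D.toRight ∧ y ∉ S.toRight
    · refine .move hfree fun y hyD hyS => ?_
      have := DomD.toLeft_or_toRight (h (inr y) (by simpa using hyD) (by simpa using hyS)) hk
      simpa [hG] using this
    · exact .win ((DomS.move hU h).dominates_toRight_of_not_exists hfree)

end

mutual

theorem domD_sum_of_domD_domS {a b : ℕ} {D S : Finset (α ⊕ β)}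
    (hG : DomD G a D.toLeft S.toLeft) (hH : DomS H b D.toRight S.toRight) :
    DomD (G ⊕g H) (a + b) D S := by
  cases hG with
  | win hGD =>
    cases hH.toDomD with
    | win hHD => exact .win (dominates_sum_iff.2 ⟨hGD, hHD⟩)
    | move y hyD hyS hH =>
      exact .move (inr y) (by simpa using hyD) (by simpa using hyS)
        (domS_sum_of_domS_domS (.win (by simpa using hGD)) (by simpa using hH))
  | move x hxD hxS hG =>
    rw [Nat.succ_add]
    exact .move (inl x) (by simpa using hxD) (by simpa using hxS)
      (domS_sum_of_domS_domS (by simpa using hG) (by simpa using hH))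
termination_by (a + b, 0)

theorem domD_sum_of_domS_domD {a b : ℕ} {D S : Finset (α ⊕ β)}
    (hG : DomS G a D.toLeft S.toLeft) (hH : DomD H b D.toRight S.toRight) :
    DomD (G ⊕g H) (a + b) D S := by
  cases hH with
  | win hHD =>
    cases hG.toDomD with
    | win hGD => exact .win (dominates_sum_iff.2 ⟨hGD, hHD⟩)
    | move x hxD hxS hG =>
      rw [Nat.succ_add]
      exact .move (inl x) (by simpa using hxD) (by simpa using hxS)
        (domS_sum_of_domS_domS (by simpa using hG) (.win (by simpa using hHD)))
  | move y hyD hyS hH =>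
    exact .move (inr y) (by simpa using hyD) (by simpa using hyS)
      (domS_sum_of_domS_domS (by simpa using hG) (by simpa using hH))
termination_by (a + b, 0)

theorem domS_sum_of_domS_domS {a b : ℕ} {D S : Finset (α ⊕ β)}
    (hG : DomS G a D.toLeft S.toLeft) (hH : DomS H b D.toRight S.toRight) :
    DomS (G ⊕g H) (a + b) D S := by
  have respond : ∀ u, u ∉ D → u ∉ S → DomD (G ⊕g H) (a + b) D (insert u S) := by
    rintro (x | y) huD huS
    · refine domD_sum_of_domD_domS ?_ (by simpa using hH)
      cases hG with
      | win hGD => exact .win hGD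
      | move _ hG => simpa using hG x (by simpa using huD) (by simpa using huS)
    · refine domD_sum_of_domS_domD (by simpa using hG) ?_
      cases hH with
      | win hHD => exact .win hHD
      | move _ hH => simpa using hH y (by simpa using huD) (by simpa using huS)
  cases hG with
  | move hfree _ =>
    obtain ⟨x, hxD, hxS⟩ := hfree
    exact .move ⟨inl x, by simpa using hxD, by simpa using hxS⟩ respond
  | win hGD =>
    cases hH with
    | win hHD => exact .win (dominates_sum_iff.2 ⟨hGD, hHD⟩)
    | move hfree _ =>
      obtain ⟨y, hyD, hyS⟩ := hfree
      exact .move ⟨inr y, by simpa using hyD, by simpa using hyS⟩ respond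
termination_by (a + b, 1)

end

end Sum

section Values

variable {V : Type*} [DecidableEq V] {G : SimpleGraph V}

theorem gMB_le_iff {k : ℕ} : gMB G ≤ k ↔ DomD G k ∅ ∅ :=
  ENat.sInf_natCast_image_le_iff fun _ _ hk h => DomD.mono h hk

theorem gMB'_le_iff {k : ℕ} : gMB' G ≤ k ↔ DomS G k ∅ ∅ :=
  ENat.sInf_natCast_image_le_iff fun _ _ hk h => DomS.mono h hk

end Values

variable {α β : Type*} [DecidableEq α] [DecidableEq β] {G : SimpleGraph α} {H : SimpleGraph β}

theorem gMB_add_gMB_le_gMB_sum : gMB G + gMB H ≤ gMB (G ⊕g H) := by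
  refine le_sInf ?_
  rintro _ ⟨n, hn, rfl⟩
  refine ENat.add_le_of_forall_add_add_one_eq (gMB_le_iff.2 hn.toLeft)
    (gMB_le_iff.2 hn.toRight) fun a b hab => ?_
  rw [gMB_le_iff, gMB_le_iff]
  exact hn.toLeft_or_toRight hab.symm

theorem gMB_sum_le_gMB'_add_gMB : gMB (G ⊕g H) ≤ gMB' G + gMB H :=
  ENat.le_add_of_forall_natCast fun _ _ ha hb =>
    gMB_le_iff.2 (domD_sum_of_domS_domD (gMB'_le_iff.1 ha) (gMB_le_iff.1 hb))

theorem gMB_sum_le_gMB_add_gMB' : gMB (G ⊕g H) ≤ gMB G + gMB' H :=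
  ENat.le_add_of_forall_natCast fun _ _ ha hb =>
    gMB_le_iff.2 (domD_sum_of_domD_domS (gMB_le_iff.1 ha) (gMB'_le_iff.1 hb))

end MBD

/-- For the disjoint union `G ⊕g H`:
`γ_MB(G) + γ_MB(H) ≤ γ_MB(G ∪ H) ≤ min{γ_MB'(G) + γ_MB(H), γ_MB(G) + γ_MB'(H)}`. -/
theorem stmt_7 {α β : Type*} [Fintype α] [DecidableEq α] [Fintype β] [DecidableEq β]
    (G : SimpleGraph α) (H : SimpleGraph β) :
    MBD.gMB G + MBD.gMB H ≤ MBD.gMB (G ⊕g H) ∧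
    MBD.gMB (G ⊕g H) ≤ min (MBD.gMB' G + MBD.gMB H) (MBD.gMB G + MBD.gMB' H) :=
  ⟨MBD.gMB_add_gMB_le_gMB_sum, le_min MBD.gMB_sum_le_gMB'_add_gMB MBD.gMB_sum_le_gMB_add_gMB'⟩
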